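/- arXiv:2112.13718 — 2 statements merged into one kernel-verified Lean document; each statement's English description precedes it below -/
import Mathlib

section
/- (Combinatorial content of Proposition 3.1, case 3.) Let f = (h₀,h₁,h₂,q₀,q₁,q₂) ∈ ℱ with h₁ < q₂ < h₂. Then the merged-arc counts of the rich Heegaard diagram R_f are N₀₁ = N₁₀ = h₁ (= b: all h₁ lower arcs issuing from C₁⁻ go to upper arcs of C₀⁺, and symmetrically), N₁₁ = 0, and N₀₀ = h₂ − h₁ (which splits geometrically as c + d with c = q₂ − h₁ and d = h₂ − q₂). -/
/-- `Ltwo h i` is `2·l_i = h_{i-1} + h_i`, the length of the cycle `C_i`. -/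
abbrev Ltwo (h : ZMod 3 → ℕ) (i : ZMod 3) : ℕ := h (i - 1) + h i

/-- The vertex set `V(f) = Σ_{i ∈ ℤ/3} ℤ/(2l_i)` of the coloured graph `Γ(f)`. -/
abbrev Vf (h : ZMod 3 → ℕ) : Type := Σ i : ZMod 3, ZMod (Ltwo h i)

/-- The admissibility conditions defining the class ℱ of 6-tuples
`f = (h₀,h₁,h₂,q₀,q₁,q₂)` (the condition `0 ≤ qᵢ` is automatic in `ℕ`). -/
structure AdmissibleF (h q : ZMod 3 → ℕ) : Prop where
  even_sum : ∀ i, Even (h i + h (i + 1))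
  q_lt : ∀ i, q i < Ltwo h i
  parity : ∀ i j, q i % 2 = q j % 2
  odd_hq : ∀ i, Odd (h i + q i)
  zero_unique : ∀ i j, h i = 0 → h j = 0 → i = j

/-- `τ₀(i,j) = (i, j + (−1)^ĵ)`. -/
def tau0 (h : ZMod 3 → ℕ) : Vf h → Vf h
  | ⟨i, j⟩ => ⟨i, j + (-1 : ZMod (Ltwo h i)) ^ j.val⟩

/-- `τ₁(i,j) = (i, j − (−1)^ĵ)`. -/
def tau1 (h : ZMod 3 → ℕ) : Vf h → Vf h
  | ⟨i, j⟩ => ⟨i, j - (-1 : ZMod (Ltwo h i)) ^ j.val⟩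

/-- `τ₂(i,j) = (i+1, (−ĵ−1) mod 2l_{i+1})` if `ĵ < h_i`, and
`τ₂(i,j) = (i−1, (2l_i−ĵ−1) mod 2l_{i−1})` if `ĵ ≥ h_i`. -/
def tau2 (h : ZMod 3 → ℕ) : Vf h → Vf h
  | ⟨i, j⟩ =>
    if j.val < h i then
      ⟨i + 1, ((-(j.val : ℤ) - 1 : ℤ) : ZMod (Ltwo h (i + 1)))⟩
    else
      ⟨i - 1, ((Ltwo h i - j.val - 1 : ℕ) : ZMod (Ltwo h (i - 1)))⟩

/-- `ρ(i,j) = (i, j + q_i)`. -/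
def rho (h q : ZMod 3 → ℕ) : Vf h → Vf h
  | ⟨i, j⟩ => ⟨i, j + (q i : ZMod (Ltwo h i))⟩

/-- `ρ⁻¹(i,j) = (i, j − q_i)`. -/
def rhoInv (h q : ZMod 3 → ℕ) : Vf h → Vf h
  | ⟨i, j⟩ => ⟨i, j - (q i : ZMod (Ltwo h i))⟩

/-- `τ₃ = ρ ∘ τ₂ ∘ ρ⁻¹`. -/
def tau3 (h q : ZMod 3 → ℕ) : Vf h → Vf h :=
  rho h q ∘ tau2 h ∘ rhoInv h q

/-- `Nab h q a b` is the number of `j ∈ ℤ/(2l₂)` such that the first coordinate of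
`τ₂(2,j)` equals `a` and the first coordinate of `τ₃(2,j)` equals `b`: the number of
merged arcs of the rich Heegaard diagram joining the circle `C_a⁺` to `C_b⁻`
after removing the cycle `C₂`. -/
noncomputable def Nab (h q : ZMod 3 → ℕ) (a b : ZMod 3) : ℕ :=
  Nat.card {j : ZMod (Ltwo h 2) // (tau2 h ⟨2, j⟩).1 = a ∧ (tau3 h q ⟨2, j⟩).1 = b}


section Aux

lemma aux_card_sub (n : ℕ) [NeZero n] (p : ZMod n → Prop) [DecidablePred p]
    (P : ℕ → Prop) [DecidablePred P] (hp : ∀ j : ZMod n, p j ↔ P j.val) :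
    Nat.card {j : ZMod n // p j} = ((Finset.range n).filter P).card := by
  rw [Nat.card_eq_fintype_card, Fintype.card_subtype]
  apply Finset.card_bij (fun j _ => ZMod.val j)
  · intro a ha
    simp only [Finset.mem_filter, Finset.mem_univ, true_and] at ha
    simp [Finset.mem_range, ZMod.val_lt, (hp a).1 ha]
  · intro a _ b _ hab
    exact ZMod.val_injective n hab
  · intro m hm
    simp only [Finset.mem_filter, Finset.mem_range] at hm
    refine ⟨(m : ZMod n), ?_, by rw [ZMod.val_natCast_of_lt hm.1]⟩
    simp [hp, ZMod.val_natCast_of_lt hm.1, hm.2]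

lemma aux_tau2_fst (h : ZMod 3 → ℕ) (j : ZMod (Ltwo h 2)) :
    (tau2 h ⟨2, j⟩).1 = if j.val < h 2 then 0 else 1 := by
  simp only [tau2]; split <;> rfl

lemma aux_tau3_fst (h q : ZMod 3 → ℕ) (j : ZMod (Ltwo h 2)) :
    (tau3 h q ⟨2, j⟩).1 =
      if (j - (q 2 : ZMod (Ltwo h 2))).val < h 2 then 0 else 1 := by
  simp only [tau3, Function.comp, rhoInv, tau2, rho]; split <;> rfl

lemma aux_subval (n Q : ℕ) [NeZero n] (hQ0 : 0 < Q) (hQ : Q < n) (j : ZMod n) :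
    (j - (Q : ZMod n)).val = (j.val + (n - Q)) % n := by
  have : j - (Q : ZMod n) = j + ((n - Q : ℕ) : ZMod n) := by
    rw [Nat.cast_sub hQ.le, ZMod.natCast_self]; ring
  rw [this, ZMod.val_add, ZMod.val_natCast,
    Nat.mod_eq_of_lt (show n - Q < n by omega)]

lemma aux_ite_eq_zero {c : Prop} [Decidable c] :
    (if c then (0 : ZMod 3) else 1) = 0 ↔ c := by split <;> simp_all
lemma aux_ite_eq_one {c : Prop} [Decidable c] :
    (if c then (0 : ZMod 3) else 1) = 1 ↔ ¬c := by split <;> simp_all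

end Aux

/-- Proposition 3.1, case 3: if `h₁ < q₂ < h₂`, then
`N₀₁ = N₁₀ = h₁ (= b)`, `N₁₁ = 0` and `N₀₀ = h₂ − h₁`, which splits geometrically as
`c + d` with `c = q₂ − h₁` and `d = h₂ − q₂`. -/
theorem prop_case3 (h q : ZMod 3 → ℕ) (hf : AdmissibleF h q)
    (hq1 : h 1 < q 2) (hq2 : q 2 < h 2) :
    Nab h q 0 1 = h 1 ∧ Nab h q 1 0 = h 1 ∧
    Nab h q 1 1 = 0 ∧ Nab h q 0 0 = h 2 - h 1 ∧
    h 2 - h 1 = (q 2 - h 1) + (h 2 - q 2) := by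
  classical
  have hL : Ltwo h 2 = h 1 + h 2 := by norm_num
  set n := Ltwo h 2 with hn
  haveI : NeZero n := ⟨by omega⟩
  have hQ0 : 0 < q 2 := by omega
  have hQn : q 2 < n := by omega
  have modv : ∀ m : ℕ, m < n →
      (m + (n - q 2)) % n = if q 2 ≤ m then m - q 2 else m + (n - q 2) := by
    intro m hm
    split
    · rw [show m + (n - q 2) = (m - q 2) + n by omega, Nat.add_mod_right,
        Nat.mod_eq_of_lt (by omega)]
    · exact Nat.mod_eq_of_lt (by omega)
  have e01 : Nab h q 0 1 =
      ((Finset.range n).filter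
        (fun m => m < h 2 ∧ ¬ ((m + (n - q 2)) % n < h 2))).card := by
    unfold Nab
    apply aux_card_sub
    intro j
    rw [aux_tau2_fst, aux_tau3_fst, aux_ite_eq_zero, aux_ite_eq_one,
      aux_subval n (q 2) hQ0 hQn j]
  have e10 : Nab h q 1 0 =
      ((Finset.range n).filter
        (fun m => ¬ (m < h 2) ∧ (m + (n - q 2)) % n < h 2)).card := by
    unfold Nab
    apply aux_card_sub
    intro j
    rw [aux_tau2_fst, aux_tau3_fst, aux_ite_eq_one, aux_ite_eq_zero,
      aux_subval n (q 2) hQ0 hQn j]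
  have e11 : Nab h q 1 1 =
      ((Finset.range n).filter
        (fun m => ¬ (m < h 2) ∧ ¬ ((m + (n - q 2)) % n < h 2))).card := by
    unfold Nab
    apply aux_card_sub
    intro j
    rw [aux_tau2_fst, aux_tau3_fst, aux_ite_eq_one, aux_ite_eq_one,
      aux_subval n (q 2) hQ0 hQn j]
  have e00 : Nab h q 0 0 =
      ((Finset.range n).filter
        (fun m => m < h 2 ∧ (m + (n - q 2)) % n < h 2)).card := by
    unfold Nab
    apply aux_card_sub
    intro j
    rw [aux_tau2_fst, aux_tau3_fst, aux_ite_eq_zero, aux_ite_eq_zero,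
      aux_subval n (q 2) hQ0 hQn j]
  have f01 : (Finset.range n).filter
      (fun m => m < h 2 ∧ ¬ ((m + (n - q 2)) % n < h 2)) =
      Finset.Ico (q 2 - h 1) (q 2) := by
    ext m
    simp only [Finset.mem_filter, Finset.mem_range, Finset.mem_Ico]
    constructor
    · rintro ⟨hmn, hA, hB⟩
      rw [modv m hmn] at hB
      by_cases hQm : q 2 ≤ m
      · rw [if_pos hQm] at hB; omega
      · rw [if_neg hQm] at hB; omega
    · rintro ⟨hc1, hc2⟩
      have hmn : m < n := by omega
      refine ⟨hmn, by omega, ?_⟩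
      rw [modv m hmn, if_neg (by omega)]
      omega
  have f10 : (Finset.range n).filter
      (fun m => ¬ (m < h 2) ∧ (m + (n - q 2)) % n < h 2) =
      Finset.Ico (h 2) n := by
    ext m
    simp only [Finset.mem_filter, Finset.mem_range, Finset.mem_Ico]
    constructor
    · rintro ⟨hmn, hA, _⟩
      omega
    · rintro ⟨hc1, hc2⟩
      refine ⟨hc2, by omega, ?_⟩
      rw [modv m hc2, if_pos (by omega)]
      omega
  have f11 : (Finset.range n).filter
      (fun m => ¬ (m < h 2) ∧ ¬ ((m + (n - q 2)) % n < h 2)) = ∅ := by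
    rw [Finset.filter_eq_empty_iff]
    intro m hm
    rw [Finset.mem_range] at hm
    rintro ⟨hA, hB⟩
    rw [modv m hm, if_pos (by omega)] at hB
    omega
  have f00 : (Finset.range n).filter
      (fun m => m < h 2 ∧ (m + (n - q 2)) % n < h 2) =
      Finset.range (q 2 - h 1) ∪ Finset.Ico (q 2) (h 2) := by
    ext m
    simp only [Finset.mem_filter, Finset.mem_range, Finset.mem_union,
      Finset.mem_Ico]
    constructor
    · rintro ⟨hmn, hA, hB⟩
      rw [modv m hmn] at hB
      by_cases hQm : q 2 ≤ m
      · rw [if_pos hQm] at hB; omega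
      · rw [if_neg hQm] at hB; omega
    · intro hc
      have hmn : m < n := by omega
      refine ⟨hmn, by omega, ?_⟩
      rw [modv m hmn]
      by_cases hQm : q 2 ≤ m
      · rw [if_pos hQm]; omega
      · rw [if_neg hQm]; omega
  have hdisj : Disjoint (Finset.range (q 2 - h 1)) (Finset.Ico (q 2) (h 2)) := by
    rw [Finset.disjoint_left]
    intro m hm1 hm2
    rw [Finset.mem_range] at hm1
    rw [Finset.mem_Ico] at hm2
    omega
  refine ⟨?_, ?_, ?_, ?_, by omega⟩
  · rw [e01, f01, Nat.card_Ico]; omega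
  · rw [e10, f10, Nat.card_Ico]; omega
  · rw [e11, f11, Finset.card_empty]
  · rw [e00, f00, Finset.card_union_of_disjoint hdisj, Finset.card_range,
      Nat.card_Ico]
    omega
end

section
/- (Combinatorial content of Proposition 3.1, case 4.) Let f = (h₀,h₁,h₂,q₀,q₁,q₂) ∈ ℱ with q₂ > h₁ and q₂ > h₂. Then the merged-arc counts of the rich Heegaard diagram R_f are N₁₀ = N₀₁ = h₁ + h₂ − q₂ (= b), N₀₀ = q₂ − h₁ (= c), and N₁₁ = q₂ − h₂ (= d). -/
lemma count_interval (L a b : ℕ) [NeZero L] (hb : b ≤ L) :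
    Nat.card {j : ZMod L // a ≤ j.val ∧ j.val < b} = b - a := by
  classical
  rw [Nat.card_eq_fintype_card, Fintype.card_subtype, ← Nat.card_Ico a b]
  apply Finset.card_bij (fun j _ => ZMod.val j)
  · intro j hj
    simp only [Finset.mem_filter, Finset.mem_univ, true_and] at hj
    simp only [Finset.mem_Ico]
    exact hj
  · intro j1 _ j2 _ hv
    exact ZMod.val_injective L hv
  · intro n hn
    simp only [Finset.mem_Ico] at hn
    refine ⟨(n : ZMod L), ?_, ?_⟩
    · simp only [Finset.mem_filter, Finset.mem_univ, true_and]
      rw [ZMod.val_natCast, Nat.mod_eq_of_lt (by omega)]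
      omega
    · rw [ZMod.val_natCast, Nat.mod_eq_of_lt (by omega)]

lemma tau2_fst (h : ZMod 3 → ℕ) (j : ZMod (Ltwo h 2)) :
    (tau2 h ⟨2, j⟩).1 = if j.val < h 2 then (0 : ZMod 3) else 1 := by
  simp only [tau2]
  split_ifs <;> rfl

lemma tau3_fst (h q : ZMod 3 → ℕ) (j : ZMod (Ltwo h 2)) :
    (tau3 h q ⟨2, j⟩).1 =
      if (j - (q 2 : ZMod (Ltwo h 2))).val < h 2 then (0 : ZMod 3) else 1 := by
  have : tau3 h q ⟨2, j⟩ = rho h q (tau2 h ⟨2, j - (q 2 : ZMod (Ltwo h 2))⟩) := rfl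
  rw [this]
  simp only [tau2, rho]
  split_ifs <;> rfl

lemma val_sub' (L c : ℕ) [NeZero L] (hc0 : 0 < c) (hc : c < L) (j : ZMod L) :
    (j - (c : ZMod L)).val = if j.val < c then j.val + L - c else j.val - c := by
  have hjv : j.val < L := ZMod.val_lt j
  have h1 : (c : ZMod L) = -((L - c : ℕ) : ZMod L) := by
    have h2 : ((L - c : ℕ) : ZMod L) + (c : ZMod L) = 0 := by
      rw [← Nat.cast_add]
      have : L - c + c = L := by omega
      rw [this, ZMod.natCast_self]
    exact (eq_neg_of_add_eq_zero_right h2)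
  rw [h1, sub_neg_eq_add, ZMod.val_add, ZMod.val_natCast,
    Nat.mod_eq_of_lt (show L - c < L by omega)]
  rcases Nat.lt_or_ge (j.val + (L - c)) L with hlt | hge
  · rw [Nat.mod_eq_of_lt hlt]; split <;> omega
  · rw [Nat.mod_eq_sub_mod hge, Nat.mod_eq_of_lt (by omega)]; split <;> omega

lemma ite01_eq_zero {c : Prop} [Decidable c] :
    ((if c then (0 : ZMod 3) else 1) = 0) ↔ c := by
  split_ifs with hc
  · simp [hc]
  · simp [hc, (by decide : (1 : ZMod 3) ≠ 0)]

lemma ite01_eq_one {c : Prop} [Decidable c] :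
    ((if c then (0 : ZMod 3) else 1) = 1) ↔ ¬c := by
  split_ifs with hc
  · simp [hc, (by decide : (0 : ZMod 3) ≠ 1)]
  · simp [hc]

/-- Proposition 3.1, case 4: if `q₂ > h₁` and `q₂ > h₂`, then
`N₁₀ = N₀₁ = h₁ + h₂ − q₂ (= b)`, `N₀₀ = q₂ − h₁ (= c)` and `N₁₁ = q₂ − h₂ (= d)`. -/
theorem prop_case4 (h q : ZMod 3 → ℕ) (hf : AdmissibleF h q)
    (hq1 : h 1 < q 2) (hq2 : h 2 < q 2) :
    Nab h q 1 0 = h 1 + h 2 - q 2 ∧ Nab h q 0 1 = h 1 + h 2 - q 2 ∧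
    Nab h q 0 0 = q 2 - h 1 ∧ Nab h q 1 1 = q 2 - h 2 := by
  have h21 : (2 - 1 : ZMod 3) = 1 := by decide
  have hL : Ltwo h 2 = h 1 + h 2 := by
    show h (2 - 1) + h 2 = h 1 + h 2
    rw [h21]
  have hq2L : q 2 < Ltwo h 2 := hf.q_lt 2
  have hq2pos : 0 < q 2 := by omega
  haveI : NeZero (Ltwo h 2) := ⟨by omega⟩
  have n10 : (1 : ZMod 3) ≠ 0 := by decide
  have n01 : (0 : ZMod 3) ≠ 1 := by decide
  have key : ∀ (a b : ZMod 3) (lo hi : ℕ), hi ≤ Ltwo h 2 →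
      (∀ j : ZMod (Ltwo h 2),
        ((tau2 h ⟨2, j⟩).1 = a ∧ (tau3 h q ⟨2, j⟩).1 = b) ↔
          (lo ≤ j.val ∧ j.val < hi)) →
      Nab h q a b = hi - lo := by
    intro a b lo hi hhi hiff
    unfold Nab
    rw [Nat.card_congr (Equiv.subtypeEquivRight hiff)]
    exact count_interval _ lo hi hhi
  have prep : ∀ j : ZMod (Ltwo h 2), j.val < Ltwo h 2 := fun j => ZMod.val_lt j
  refine ⟨?_, ?_, ?_, ?_⟩
  · rw [key 1 0 (q 2) (Ltwo h 2) le_rfl ?_]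
    · omega
    · intro j
      have hjv := prep j
      rw [tau2_fst, tau3_fst, val_sub' _ _ hq2pos hq2L, ite01_eq_one, ite01_eq_zero]
      rcases Nat.lt_or_ge j.val (q 2) with hc | hc
      · rw [if_pos hc]; omega
      · rw [if_neg (by omega)]; omega
  · rw [key 0 1 (q 2 - h 1) (h 2) (by omega) ?_]
    · omega
    · intro j
      have hjv := prep j
      rw [tau2_fst, tau3_fst, val_sub' _ _ hq2pos hq2L, ite01_eq_zero, ite01_eq_one]
      rcases Nat.lt_or_ge j.val (q 2) with hc | hc
      · rw [if_pos hc]; omega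
      · rw [if_neg (by omega)]; omega
  · rw [key 0 0 0 (q 2 - h 1) (by omega) ?_]
    · omega
    · intro j
      have hjv := prep j
      rw [tau2_fst, tau3_fst, val_sub' _ _ hq2pos hq2L, ite01_eq_zero, ite01_eq_zero]
      rcases Nat.lt_or_ge j.val (q 2) with hc | hc
      · rw [if_pos hc]; omega
      · rw [if_neg (by omega)]; omega
  · rw [key 1 1 (h 2) (q 2) (by omega) ?_]
    · intro j
      have hjv := prep j
      rw [tau2_fst, tau3_fst, val_sub' _ _ hq2pos hq2L, ite01_eq_one, ite01_eq_one]
      rcases Nat.lt_or_ge j.val (q 2) with hc | hc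
      · rw [if_pos hc]; omega
      · rw [if_neg (by omega)]; omega
end
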